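/- A countable collection C of infinite languages over U can be uniformly generated with feedback if and only if its GF dimension is finite. -/

import Mathlib

/-! STATEMENT 16: A countable collection C of infinite languages over U can be uniformly generated with feedback iff its GF dimension is finite. -/

/-- A generator strategy in the feedback model: `query h x` is the membership query
`y_t` issued after receiving input `x_t` with history `h` of completed rounds, and
`out h x y a` is the output `z_t` after the answer `a_t` to the query. -/
structure FGen (U : Type) where
  query : List (U × U × Bool × U) → U → U
  out : List (U × U × Bool × U) → U → U → Bool → U

/-- An adversary strategy in the feedback model: `inp h` is the next input `x_t`,
and `ans h x y` is the yes/no answer `a_t` to the generator's query `y_t`. -/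
structure FAdv (U : Type) where
  inp : List (U × U × Bool × U) → U
  ans : List (U × U × Bool × U) → U → U → Bool

/-- The history of the first `t` completed rounds `(x_s, y_s, a_s, z_s)` of the
interaction between `Adv` and `Gen`. -/
def fRun {U : Type} (Adv : FAdv U) (Gen : FGen U) : ℕ → List (U × U × Bool × U)
  | 0 => []
  | t + 1 =>
      let h := fRun Adv Gen t
      let x := Adv.inp h
      let y := Gen.query h x
      let a := Adv.ans h x y
      h ++ [(x, y, a, Gen.out h x y a)]

/-- The input `x_t` of round `t` (0-indexed) of the transcript T(Adv, Gen). -/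
def fX {U : Type} (Adv : FAdv U) (Gen : FGen U) (t : ℕ) : U :=
  Adv.inp (fRun Adv Gen t)

/-- The generator's query `y_t` of round `t`. -/
def fY {U : Type} (Adv : FAdv U) (Gen : FGen U) (t : ℕ) : U :=
  Gen.query (fRun Adv Gen t) (fX Adv Gen t)

/-- The adversary's answer `a_t` of round `t`. -/
def fA {U : Type} (Adv : FAdv U) (Gen : FGen U) (t : ℕ) : Bool :=
  Adv.ans (fRun Adv Gen t) (fX Adv Gen t) (fY Adv Gen t)

/-- The generator's output `z_t` of round `t`. -/
def fZ {U : Type} (Adv : FAdv U) (Gen : FGen U) (t : ℕ) : U :=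
  Gen.out (fRun Adv Gen t) (fX Adv Gen t) (fY Adv Gen t) (fA Adv Gen t)

/-- `S_r`: the set of distinct inputs among the first `r` rounds. -/
def fS {U : Type} (Adv : FAdv U) (Gen : FGen U) (r : ℕ) : Set U :=
  fX Adv Gen '' {t | t < r}

/-- The adversary strategy `Adv` is consistent with the language `K` (against `Gen`):
the inputs form an enumeration of `K` and every answer is truthful for `K`. -/
def fConsistent {U : Type} (Adv : FAdv U) (Gen : FGen U) (K : Set U) : Prop :=
  (∀ t, fX Adv Gen t ∈ K) ∧ (∀ w ∈ K, ∃ t, fX Adv Gen t = w) ∧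
    ∀ t, fA Adv Gen t = true ↔ fY Adv Gen t ∈ K

/-- `C_r(T)`: the languages of `C` consistent with the transcript up to round `r`
(inputs belong to the language and all answers are truthful for it). -/
def fCons {U : Type} (C : Set (Set U)) (Adv : FAdv U) (Gen : FGen U) (r : ℕ) :
    Set (Set U) :=
  {Lang ∈ C | ∀ t < r, fX Adv Gen t ∈ Lang ∧ (fA Adv Gen t = true ↔ fY Adv Gen t ∈ Lang)}

/-- The effective intersection `E_r(T)`. -/
def fE {U : Type} (C : Set (Set U)) (Adv : FAdv U) (Gen : FGen U) (r : ℕ) : Set U :=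
  ⋂₀ fCons C Adv Gen r \ fS Adv Gen r

/-- The GF dimension of `C`: the supremum of all `d ∈ ℕ` such that for every
generator strategy there are `K ∈ C` and an adversary strategy consistent with `K`
whose transcript has a finite round `r ≥ d` with `|S_r| ≥ d` and `E_r(T) = ∅`. -/
noncomputable def gfDim {U : Type} (C : Set (Set U)) : ℕ∞ :=
  sSup {e : ℕ∞ | ∃ d : ℕ, e = (d : ℕ∞) ∧
    ∀ Gen : FGen U, ∃ K ∈ C, ∃ Adv : FAdv U,
      fConsistent Adv Gen K ∧
      ∃ r : ℕ, d ≤ r ∧ d ≤ (fS Adv Gen r).ncard ∧ fE C Adv Gen r = ∅}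

/-- `C` can be uniformly generated with feedback: some generator strategy `Gen` and
bound `t*` are such that against every adversary consistent with any `K ∈ C`, the
output of every round `t` with `|S_t| ≥ t*` lies in `K \ S_t` (here `S_t` counts the
inputs up to and including round `t`). -/
def UniformGenWithFeedback {U : Type} (C : Set (Set U)) : Prop :=
  ∃ Gen : FGen U, ∃ tstar : ℕ,
    ∀ K ∈ C, ∀ Adv : FAdv U, fConsistent Adv Gen K →
      ∀ t : ℕ, tstar ≤ (fS Adv Gen (t + 1)).ncard →
        fZ Adv Gen t ∈ K \ fS Adv Gen (t + 1)

/-! If `Gen` generates uniformly from threshold `t*` and `r` is a round with `|S_r| > t*`, then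
the output `z_{r-1}` is a fresh element of every language `L ∈ C_r`: the adversary may continue
the play truthfully for `L` without changing the first `r` rounds. Hence `z_{r-1} ∈ E_r`, so
`E_r ≠ ∅` and the GF dimension is at most `t*`.

Conversely, if some `G₀` keeps `E_r` nonempty whenever `r, |S_r| ≥ d`, let a new generator ask
the queries `G₀` would ask (replaying `G₀`'s own outputs, on which those queries may depend)
and output a point of `E_{t+1}`. Any adversary against it is, in disguise, an adversary against
`G₀` with the same inputs, queries and answers, so `E_{t+1}` is nonempty once `|S_{t+1}| ≥ d`,
and `E_{t+1} ⊆ K \ S_{t+1}`. -/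

namespace Feedback

variable {U : Type}

lemma fRun_succ (A : FAdv U) (G : FGen U) (t : ℕ) :
    fRun A G (t + 1) = fRun A G t ++ [(fX A G t, fY A G t, fA A G t, fZ A G t)] :=
  rfl

lemma fRun_eq_map_range (A : FAdv U) (G : FGen U) (r : ℕ) :
    fRun A G r = (List.range r).map fun t => (fX A G t, fY A G t, fA A G t, fZ A G t) := by
  induction r with
  | zero => rfl
  | succ r ih => rw [fRun_succ, ih, List.range_succ, List.map_append]; rfl

lemma length_fRun (A : FAdv U) (G : FGen U) (r : ℕ) : (fRun A G r).length = r := by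
  simp [fRun_eq_map_range]

lemma round_eq_of_fRun_eq {A A' : FAdv U} {G G' : FGen U} {r t : ℕ}
    (h : fRun A G r = fRun A' G' r) (ht : t < r) :
    fX A G t = fX A' G' t ∧ fY A G t = fY A' G' t ∧ fA A G t = fA A' G' t ∧
      fZ A G t = fZ A' G' t := by
  rw [fRun_eq_map_range, fRun_eq_map_range, List.map_inj_left] at h
  simpa using h t (List.mem_range.mpr ht)

lemma fRun_eq_of_agree_below {A A' : FAdv U} (G : FGen U) {r : ℕ}
    (hinp : ∀ h, h.length < r → A'.inp h = A.inp h)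
    (hans : ∀ h, h.length < r → A'.ans h = A.ans h) :
    ∀ t ≤ r, fRun A' G t = fRun A G t
  | 0, _ => rfl
  | t + 1, ht => by
    have ih := fRun_eq_of_agree_below G hinp hans t (by omega)
    have hlen : (fRun A G t).length < r := by rw [length_fRun]; omega
    simp only [fRun, ih, hinp _ hlen, hans _ hlen]

lemma fS_eq_of_fRun_eq {A A' : FAdv U} {G G' : FGen U} {r : ℕ}
    (h : fRun A G r = fRun A' G' r) : fS A G r = fS A' G' r :=
  Set.image_congr fun _ ht => (round_eq_of_fRun_eq h ht).1

lemma ncard_fS_le (A : FAdv U) (G : FGen U) (r : ℕ) : (fS A G r).ncard ≤ r :=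
  (Set.ncard_image_le (Set.finite_Iio r)).trans (Set.ncard_Iio_nat r).le

lemma mem_fCons_of_fConsistent {C : Set (Set U)} {Adv : FAdv U} {G : FGen U} {K : Set U}
    (hK : K ∈ C) (hcons : fConsistent Adv G K) (r : ℕ) : K ∈ fCons C Adv G r :=
  ⟨hK, fun t _ => ⟨hcons.1 t, hcons.2.2 t⟩⟩

open Classical in
noncomputable def extendAdv (Adv : FAdv U) (r : ℕ) (e : ℕ → U) (L : Set U) : FAdv U where
  inp h := if h.length < r then Adv.inp h else e (h.length - r)
  ans h x y := if h.length < r then Adv.ans h x y else decide (y ∈ L)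

lemma fRun_extendAdv (Adv : FAdv U) (G : FGen U) (r : ℕ) (e : ℕ → U) (L : Set U) :
    fRun (extendAdv Adv r e L) G r = fRun Adv G r :=
  fRun_eq_of_agree_below G (fun _ h => if_pos h) (fun _ h => funext₂ fun _ _ => if_pos h) r le_rfl

lemma fConsistent_extendAdv {Adv : FAdv U} {G : FGen U} {r : ℕ} {e : ℕ → U} {L : Set U}
    (he : Set.range e = L)
    (hpre : ∀ t < r, fX Adv G t ∈ L ∧ (fA Adv G t = true ↔ fY Adv G t ∈ L)) :
    fConsistent (extendAdv Adv r e L) G L := by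
  classical
  have hearly := fun t (ht : t < r) => round_eq_of_fRun_eq (fRun_extendAdv Adv G r e L) ht
  have hx_late : ∀ t, r ≤ t → fX (extendAdv Adv r e L) G t = e (t - r) := fun t ht => by
    simp only [fX, extendAdv, length_fRun, if_neg (Nat.not_lt.mpr ht)]
  refine ⟨fun t => ?_, fun w hw => ?_, fun t => ?_⟩
  · rcases lt_or_ge t r with ht | ht
    · exact (hearly t ht).1 ▸ (hpre t ht).1
    · exact hx_late t ht ▸ he ▸ Set.mem_range_self _
  · obtain ⟨n, rfl⟩ := he ▸ hw
    exact ⟨r + n, by rw [hx_late _ (by omega), Nat.add_sub_cancel_left]⟩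
  · rcases lt_or_ge t r with ht | ht
    · rw [(hearly t ht).2.2.1, (hearly t ht).2.1]
      exact (hpre t ht).2
    · simp only [fA, extendAdv, length_fRun, if_neg (Nat.not_lt.mpr ht), decide_eq_true_iff]

lemma exists_fConsistent_extension [Countable U] {L : Set U} (hL : L.Nonempty)
    (Adv : FAdv U) (G : FGen U) {r : ℕ}
    (hpre : ∀ t < r, fX Adv G t ∈ L ∧ (fA Adv G t = true ↔ fY Adv G t ∈ L)) :
    ∃ Adv' : FAdv U, fConsistent Adv' G L ∧ fRun Adv' G r = fRun Adv G r := by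
  obtain ⟨e, he⟩ := L.to_countable.exists_eq_range hL
  exact ⟨extendAdv Adv r e L, fConsistent_extendAdv he.symm hpre, fRun_extendAdv Adv G r e L⟩

def UniformlyGenerates (C : Set (Set U)) (Gen : FGen U) (tstar : ℕ) : Prop :=
  ∀ K ∈ C, ∀ Adv : FAdv U, fConsistent Adv Gen K →
    ∀ t : ℕ, tstar ≤ (fS Adv Gen (t + 1)).ncard → fZ Adv Gen t ∈ K \ fS Adv Gen (t + 1)

lemma uniformGenWithFeedback_iff (C : Set (Set U)) :
    UniformGenWithFeedback C ↔ ∃ Gen tstar, UniformlyGenerates C Gen tstar :=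
  Iff.rfl

def AdversaryWins (C : Set (Set U)) (d : ℕ) (Gen : FGen U) : Prop :=
  ∃ K ∈ C, ∃ Adv : FAdv U, fConsistent Adv Gen K ∧
    ∃ r : ℕ, d ≤ r ∧ d ≤ (fS Adv Gen r).ncard ∧ fE C Adv Gen r = ∅

lemma AdversaryWins.mono {C : Set (Set U)} {d d' : ℕ} {Gen : FGen U}
    (h : AdversaryWins C d Gen) (hd : d' ≤ d) : AdversaryWins C d' Gen := by
  obtain ⟨K, hK, Adv, hcons, r, hr, hS, hE⟩ := h
  exact ⟨K, hK, Adv, hcons, r, hd.trans hr, hd.trans hS, hE⟩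

lemma gfDim_ne_top_iff (C : Set (Set U)) :
    gfDim C ≠ ⊤ ↔ ∃ d : ℕ, ∃ Gen : FGen U, ¬ AdversaryWins C d Gen := by
  constructor
  · intro hfin
    by_contra! hall
    exact hfin (ENat.eq_top_iff_forall_ge.mpr fun d => le_sSup ⟨d, rfl, hall d⟩)
  · rintro ⟨d, Gen, hlose⟩
    refine ne_top_of_le_ne_top (ENat.natCast_ne_top d) (sSup_le ?_)
    rintro _ ⟨d', rfl, hwin⟩
    by_contra! hlt
    exact hlose (AdversaryWins.mono (hwin Gen) (by exact_mod_cast hlt.le))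

lemma UniformlyGenerates.le_of_adversaryWins [Countable U] {C : Set (Set U)} {Gen : FGen U}
    {tstar d : ℕ} (hGen : UniformlyGenerates C Gen tstar) (hwin : AdversaryWins C d Gen) :
    d ≤ tstar := by
  by_contra! hlt
  obtain ⟨K, hK, Adv, hcons, r, hdr, hdS, hE⟩ := hwin
  obtain ⟨t, rfl⟩ : ∃ t, r = t + 1 := Nat.exists_eq_succ_of_ne_zero (by omega)
  -- Continuing the play truthfully for any `L` still in `C_{t+1}` forces `z_t ∈ L \ S_{t+1}`.
  have hfresh : ∀ L ∈ fCons C Adv Gen (t + 1), fZ Adv Gen t ∈ L \ fS Adv Gen (t + 1) := by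
    rintro L ⟨hLC, hpre⟩
    obtain ⟨Adv', hcons', hrun⟩ :=
      exists_fConsistent_extension ⟨_, (hpre 0 t.succ_pos).1⟩ Adv Gen hpre
    rw [← fS_eq_of_fRun_eq hrun, ← (round_eq_of_fRun_eq hrun t.lt_succ_self).2.2.2]
    exact hGen L hLC Adv' hcons' t (by rw [fS_eq_of_fRun_eq hrun]; omega)
  have hz : fZ Adv Gen t ∈ fE C Adv Gen (t + 1) :=
    ⟨fun L hL => (hfresh L hL).1, (hfresh K (mem_fCons_of_fConsistent hK hcons _)).2⟩
  simp [hE] at hz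

def dropOutputs (h : List (U × U × Bool × U)) : List (U × U × Bool) :=
  h.map fun q => (q.1, q.2.1, q.2.2.1)

/-- Replays the rounds `(x, y, a)` of `c`, with the outputs that `G` would have produced. -/
def fillOutputs (G : FGen U) (c : List (U × U × Bool)) : List (U × U × Bool × U) :=
  c.foldl (fun h p => h ++ [(p.1, p.2.1, p.2.2, G.out h p.1 p.2.1 p.2.2)]) []

lemma dropOutputs_fRun_eq_map_range (A : FAdv U) (G : FGen U) (r : ℕ) :
    dropOutputs (fRun A G r) = (List.range r).map fun t => (fX A G t, fY A G t, fA A G t) := by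
  simp [dropOutputs, fRun_eq_map_range]

lemma dropOutputs_fRun_succ (A : FAdv U) (G : FGen U) (t : ℕ) :
    dropOutputs (fRun A G (t + 1)) =
      dropOutputs (fRun A G t) ++ [(fX A G t, fY A G t, fA A G t)] := by
  simp [dropOutputs, fRun_succ]

lemma fillOutputs_dropOutputs_fRun (A : FAdv U) (G : FGen U) (t : ℕ) :
    fillOutputs G (dropOutputs (fRun A G t)) = fRun A G t := by
  induction t with
  | zero => rfl
  | succ t ih =>
    rw [dropOutputs_fRun_succ, fillOutputs, List.foldl_append, ← fillOutputs, ih]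
    rfl

lemma fX_fY_fA_eq_of_dropOutputs_fRun_eq {A A' : FAdv U} {G G' : FGen U}
    (h : ∀ r, dropOutputs (fRun A G r) = dropOutputs (fRun A' G' r)) :
    fX A G = fX A' G' ∧ fY A G = fY A' G' ∧ fA A G = fA A' G' := by
  have ht : ∀ t, (fX A G t, fY A G t, fA A G t) = (fX A' G' t, fY A' G' t, fA A' G' t) := by
    intro t
    have := h (t + 1)
    rw [dropOutputs_fRun_eq_map_range, dropOutputs_fRun_eq_map_range, List.map_inj_left] at this
    exact this t (List.mem_range.mpr t.lt_succ_self)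
  simp only [Prod.mk.injEq] at ht
  exact ⟨funext fun t => (ht t).1, funext fun t => (ht t).2.1, funext fun t => (ht t).2.2⟩

def effInter (C : Set (Set U)) (c : List (U × U × Bool)) : Set U :=
  ⋂₀ {L ∈ C | ∀ p ∈ c, p.1 ∈ L ∧ (p.2.2 = true ↔ p.2.1 ∈ L)} \ {u | ∃ p ∈ c, p.1 = u}

lemma effInter_dropOutputs_fRun (C : Set (Set U)) (A : FAdv U) (G : FGen U) (r : ℕ) :
    effInter C (dropOutputs (fRun A G r)) = fE C A G r := by
  simp [effInter, fE, fCons, fS, Set.image, dropOutputs_fRun_eq_map_range]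

open Classical in
/-- Queries as `G₀` would on the same rounds, and outputs a point of the effective intersection
whenever it is nonempty. -/
@[simps]
noncomputable def effGen (C : Set (Set U)) (G₀ : FGen U) : FGen U where
  query h x := G₀.query (fillOutputs G₀ (dropOutputs h)) x
  out h x y a :=
    if hE : (effInter C (dropOutputs h ++ [(x, y, a)])).Nonempty then hE.some else x

/-- Plays against `G₀` what `Adv` plays against `G` on the same rounds. -/
@[simps]
def simAdv (G : FGen U) (Adv : FAdv U) : FAdv U where
  inp h := Adv.inp (fillOutputs G (dropOutputs h))
  ans h := Adv.ans (fillOutputs G (dropOutputs h))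

lemma dropOutputs_fRun_simAdv {G G₀ : FGen U}
    (hq : ∀ h x, G.query h x = G₀.query (fillOutputs G₀ (dropOutputs h)) x)
    (Adv : FAdv U) (r : ℕ) :
    dropOutputs (fRun (simAdv G Adv) G₀ r) = dropOutputs (fRun Adv G r) := by
  induction r with
  | zero => rfl
  | succ r ih =>
    have hx : fX (simAdv G Adv) G₀ r = fX Adv G r := by
      simp only [fX, simAdv_inp, ih, fillOutputs_dropOutputs_fRun]
    have hy : fY (simAdv G Adv) G₀ r = fY Adv G r := by
      simp only [fY, hq, hx, ← ih, fillOutputs_dropOutputs_fRun]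
    have ha : fA (simAdv G Adv) G₀ r = fA Adv G r := by
      simp only [fA, simAdv_ans, hx, hy, ih, fillOutputs_dropOutputs_fRun]
    rw [dropOutputs_fRun_succ, dropOutputs_fRun_succ, ih, hx, hy, ha]

lemma fZ_effGen_mem_fE {C : Set (Set U)} {G₀ : FGen U} {Adv : FAdv U} {t : ℕ}
    (hne : (fE C Adv (effGen C G₀) (t + 1)).Nonempty) :
    fZ Adv (effGen C G₀) t ∈ fE C Adv (effGen C G₀) (t + 1) := by
  rw [← effInter_dropOutputs_fRun] at hne ⊢
  rw [fZ, effGen_out, ← dropOutputs_fRun_succ, dif_pos hne]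
  exact hne.some_mem

lemma uniformlyGenerates_effGen {C : Set (Set U)} {G₀ : FGen U} {d : ℕ}
    (hlose : ¬ AdversaryWins C d G₀) : UniformlyGenerates C (effGen C G₀) d := by
  intro K hK Adv hcons t hcard
  obtain ⟨hx, hy, ha⟩ := fX_fY_fA_eq_of_dropOutputs_fRun_eq
    (dropOutputs_fRun_simAdv (G := effGen C G₀) (fun _ _ => rfl) Adv)
  set Adv₀ := simAdv (effGen C G₀) Adv
  have hS : fS Adv₀ G₀ (t + 1) = fS Adv (effGen C G₀) (t + 1) := by simp only [fS, hx]
  have hE : fE C Adv₀ G₀ (t + 1) = fE C Adv (effGen C G₀) (t + 1) := by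
    simp only [fE, fCons, fS, hx, hy, ha]
  have hcons₀ : fConsistent Adv₀ G₀ K := by simpa only [fConsistent, hx, hy, ha] using hcons
  have hne : (fE C Adv (effGen C G₀) (t + 1)).Nonempty := by
    refine Set.nonempty_iff_ne_empty.mpr fun hempty => hlose ?_
    exact ⟨K, hK, Adv₀, hcons₀, t + 1, hcard.trans (ncard_fS_le _ _ _), hS ▸ hcard, hE ▸ hempty⟩
  have hz := fZ_effGen_mem_fE hne
  exact ⟨hz.1 K (mem_fCons_of_fConsistent hK hcons _), hz.2⟩

end Feedback

theorem uniform_generation_with_feedback_characterization_general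
    (U : Type) [Countable U]
    (C : Set (Set U)) :
    UniformGenWithFeedback C ↔ gfDim C ≠ ⊤ := by
  rw [Feedback.uniformGenWithFeedback_iff, Feedback.gfDim_ne_top_iff]
  constructor
  · rintro ⟨Gen, tstar, hGen⟩
    exact ⟨tstar + 1, Gen, fun hwin => by have := hGen.le_of_adversaryWins hwin; omega⟩
  · rintro ⟨d, G₀, hlose⟩
    exact ⟨Feedback.effGen C G₀, d, Feedback.uniformlyGenerates_effGen hlose⟩

theorem uniform_generation_with_feedback_characterization
    (U : Type) [Countable U] [Infinite U]
    (C : Set (Set U)) (hC : C.Countable) (hInf : ∀ L ∈ C, L.Infinite) :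
    UniformGenWithFeedback C ↔ gfDim C ≠ ⊤ :=
  uniform_generation_with_feedback_characterization_general U C
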